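/- arXiv:1302.3830 — 6 statements merged into one kernel-verified Lean document; each statement's English description precedes it below -/
import Mathlib

section
/- For all real numbers α, p, q with 0 < α < 1, 0 < p < 1, 0 < q < 1 and real c with 1 < c < 2, there exists N₀ such that for every N ≥ N₀ there exists an N-dimensional Boolean network (not required to be cooperative) that is p-c-chaotic and exhibits p-α-q-decoherence. -/
/-- The state space of an `N`-dimensional Boolean network. -/
abbrev BState (N : ℕ) := Fin N → Bool

/-- The attractor (eventual periodic orbit) reached from initial condition `s`:
the set of states visited infinitely often by the trajectory `t ↦ f^[t] s`. -/
def attractor {N : ℕ} (f : BState N → BState N) (s : BState N) : Set (BState N) :=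
  {x | ∀ T : ℕ, ∃ t ≥ T, f^[t] s = x}

/-- The network `f` is `p`-`c`-chaotic: more than `p·2^N` initial conditions
reach an attractor of length `> c^N`. -/
def pcChaotic {N : ℕ} (f : BState N → BState N) (p c : ℝ) : Prop :=
  p * 2 ^ N < (({s : BState N | (c : ℝ) ^ N < ((attractor f s).ncard : ℝ)}).ncard : ℝ)

/-- Ordered pairs of states at Hamming distance exactly 1. -/
def PerturbPairs (N : ℕ) : Set (BState N × BState N) :=
  {q | hammingDist q.1 q.2 = 1}

/-- `p`-coalescence: more than `p·N·2^N` perturbation pairs have trajectories that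
coincide at some positive time. -/
def pCoalescent {N : ℕ} (f : BState N → BState N) (p : ℝ) : Prop :=
  p * ((N : ℝ) * 2 ^ N) <
    (({q ∈ PerturbPairs N | ∃ t > 0, f^[t] q.1 = f^[t] q.2}).ncard : ℝ)

/-- `p`-instability: at least `p·N·2^N` perturbation pairs reach different attractors. -/
def pUnstable {N : ℕ} (f : BState N → BState N) (p : ℝ) : Prop :=
  p * ((N : ℝ) * 2 ^ N) ≤
    (({q ∈ PerturbPairs N | attractor f q.1 ≠ attractor f q.2}).ncard : ℝ)

/-- Coordinate `j` is an input of coordinate `i` of `f` (equivalently, `i` is an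
output of `j`): the `i`-th coordinate of `f` depends on the `j`-th coordinate. -/
def isInput {N : ℕ} (f : BState N → BState N) (j i : Fin N) : Prop :=
  ∃ s s' : BState N, (∀ k, k ≠ j → s k = s' k) ∧ f s i ≠ f s' i

/-- Every coordinate has at most 2 inputs and at most 2 outputs. -/
def biQuadratic {N : ℕ} (f : BState N → BState N) : Prop :=
  ∀ i : Fin N, ({j | isInput f j i}.ncard ≤ 2) ∧ ({j | isInput f i j}.ncard ≤ 2)

/-- Bi-quadratic and every coordinate has exactly 2 inputs. -/
def strictlyBiQuadratic {N : ℕ} (f : BState N → BState N) : Prop :=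
  biQuadratic f ∧ ∀ i : Fin N, {j | isInput f j i}.ncard = 2

/-- `p`-`α`-decoherence: at least `p·N·2^N` perturbation pairs have Hamming distance
`≥ α·N` at infinitely many times `t > 0`. -/
def pAlphaDecoherent {N : ℕ} (f : BState N → BState N) (p α : ℝ) : Prop :=
  p * ((N : ℝ) * 2 ^ N) ≤
    (({q ∈ PerturbPairs N |
        ∀ T : ℕ, ∃ t > T,
          α * N ≤ (hammingDist (f^[t] q.1) (f^[t] q.2) : ℝ)}).ncard : ℝ)

/-- `p`-`α`-`q`-decoherence: at least `p·N·2^N` perturbation pairs are such that, for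
all sufficiently large `t*`, the Hamming distance is `≥ α·N` on at least a proportion
`q` of the times `t ∈ {0, …, t*}`. -/
def pAlphaQDecoherent {N : ℕ} (f : BState N → BState N) (p α q : ℝ) : Prop :=
  p * ((N : ℝ) * 2 ^ N) ≤
    (({r ∈ PerturbPairs N |
        ∃ T₀ : ℕ, ∀ tstar : ℕ, T₀ ≤ tstar →
          q * ((tstar : ℝ) + 1) ≤
            (({t : ℕ | t ≤ tstar ∧
                α * N ≤ (hammingDist (f^[t] r.1) (f^[t] r.2) : ℝ)}).ncard : ℝ)}).ncard : ℝ)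
/-!
Take a cycle `γ : ZMod L → BState N` of length `L = 2 ^ (N - k)` with `γ (u + L / 2)` the
complement of `γ u`, and let the network advance along the cycle and send an off-cycle state `s`
to `γ (w • L / 2)`, where `w` is the number of true coordinates of `s`. Every trajectory then
falls onto the cycle after one step, so every attractor has length `L > c ^ N`. Flipping one
coordinate changes `w` by one, so the two trajectories of a perturbation pair that avoids the
cycle stay half a period apart, i.e. at Hamming distance `N`, at all times `t ≥ 1`. At most
`2 N L ≤ (1 - p) N 2 ^ N` perturbation pairs meet the cycle, once `k` is large enough.
-/

namespace BooleanNetwork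

lemma hammingDist_not {ι : Type*} [Fintype ι] (s : ι → Bool) :
    hammingDist s (fun i => !s i) = Fintype.card ι := by
  simp [hammingDist]

section Flip

variable {ι : Type*} [DecidableEq ι]

def flipAt (s : ι → Bool) (j : ι) : ι → Bool := Function.update s j (!s j)

lemma flipAt_injective (s : ι → Bool) : Function.Injective (flipAt s) := by
  intro i j h
  by_contra hij
  simpa [flipAt, Function.update_of_ne hij] using congrFun h i

variable [Fintype ι]

lemma hammingDist_eq_one_iff {s s' : ι → Bool} :
    hammingDist s s' = 1 ↔ ∃ j, flipAt s j = s' := by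
  rw [hammingDist, Finset.card_eq_one]
  refine exists_congr fun j => ?_
  simp only [Finset.ext_iff, funext_iff, flipAt, Function.update_apply, Finset.mem_filter,
    Finset.mem_univ, true_and, Finset.mem_singleton]
  refine forall_congr' fun i => ?_
  rcases eq_or_ne i j with rfl | h <;> cases s i <;> cases s' i <;> simp [*]

def entry {G : Type*} [AddCommMonoid G] (M : G) (s : ι → Bool) : G :=
  ∑ i, if s i then M else 0

lemma entry_flipAt {G : Type*} [AddCommMonoid G] {M : G} (hM : M + M = 0) (s : ι → Bool)
    (j : ι) : entry M (flipAt s j) = entry M s + M := by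
  have hoff : ∑ i ∈ Finset.univ.erase j, (if flipAt s j i then M else 0) =
      ∑ i ∈ Finset.univ.erase j, (if s i then M else 0) :=
    Finset.sum_congr rfl fun i hi => by
      rw [flipAt, Function.update_of_ne (Finset.ne_of_mem_erase hi)]
  rw [entry, entry, ← Finset.add_sum_erase _ _ (Finset.mem_univ j),
    ← Finset.add_sum_erase _ _ (Finset.mem_univ j), hoff, flipAt, Function.update_self]
  cases s j
  · simp [add_comm]
  · simp [add_right_comm, hM]

end Flip

section PerturbPairs

variable {N : ℕ}

def perturbPair (x : BState N × Fin N) : BState N × BState N := (x.1, flipAt x.1 x.2)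

lemma perturbPair_injective : Function.Injective (perturbPair (N := N)) := by
  rintro ⟨s, i⟩ ⟨s', j⟩ h
  obtain ⟨rfl, h⟩ := Prod.mk.inj h
  exact Prod.ext rfl (flipAt_injective s h)

lemma perturbPair_image (E : Set (BState N)) :
    perturbPair '' (E ×ˢ Set.univ) = {r ∈ PerturbPairs N | r.1 ∈ E} := by
  ext ⟨s, s'⟩
  simp only [Set.mem_image, Set.mem_prod, Set.mem_univ, and_true, Prod.exists, perturbPair,
    Prod.mk.injEq, Set.mem_ofPred_eq, PerturbPairs, hammingDist_eq_one_iff]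
  constructor
  · rintro ⟨_, j, hs, rfl, rfl⟩
    exact ⟨⟨j, rfl⟩, hs⟩
  · rintro ⟨⟨j, rfl⟩, hs⟩
    exact ⟨s, j, hs, rfl, rfl⟩

lemma ncard_perturbPairs_fst_mem (E : Set (BState N)) :
    {r ∈ PerturbPairs N | r.1 ∈ E}.ncard = E.ncard * N := by
  rw [← perturbPair_image, Set.ncard_image_of_injective _ perturbPair_injective,
    Set.ncard_prod, Set.ncard_univ, Nat.card_eq_fintype_card, Fintype.card_fin]

lemma ncard_perturbPairs_snd_mem (E : Set (BState N)) :
    {r ∈ PerturbPairs N | r.2 ∈ E}.ncard = E.ncard * N := by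
  have hswap :
      {r ∈ PerturbPairs N | r.2 ∈ E} = Prod.swap '' {r ∈ PerturbPairs N | r.1 ∈ E} := by
    ext ⟨s, s'⟩
    simp [PerturbPairs, hammingDist_comm s s']
  rw [hswap, Set.ncard_image_of_injective _ Prod.swap_injective, ncard_perturbPairs_fst_mem]

lemma ncard_perturbPairs : (PerturbPairs N).ncard = 2 ^ N * N := by
  have h := ncard_perturbPairs_fst_mem (N := N) Set.univ
  simp only [Set.mem_univ, and_true, Set.ofPred_mem_eq, Set.ncard_univ, Nat.card_eq_fintype_card,
    Fintype.card_fun, Fintype.card_bool, Fintype.card_fin] at h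
  exact h

lemma le_ncard_perturbPairs_avoiding (E : Set (BState N)) :
    2 ^ N * N ≤ {r ∈ PerturbPairs N | r.1 ∉ E ∧ r.2 ∉ E}.ncard + 2 * (E.ncard * N) := by
  have hcover : PerturbPairs N ⊆ {r ∈ PerturbPairs N | r.1 ∉ E ∧ r.2 ∉ E} ∪
      ({r ∈ PerturbPairs N | r.1 ∈ E} ∪ {r ∈ PerturbPairs N | r.2 ∈ E}) := by
    intro r hr
    by_cases h1 : r.1 ∈ E <;> by_cases h2 : r.2 ∈ E <;> simp [hr, h1, h2]
  have h := (Set.ncard_le_ncard hcover).trans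
    ((Set.ncard_union_le _ _).trans (Nat.add_le_add_left (Set.ncard_union_le _ _) _))
  rwa [ncard_perturbPairs, ncard_perturbPairs_fst_mem, ncard_perturbPairs_snd_mem, ← two_mul] at h

end PerturbPairs

lemma exists_forall_le_mul_succ_le_ncard {P : ℕ → Prop} (hP : ∀ t, P (t + 1)) {q : ℝ}
    (hq : q < 1) :
    ∃ T₀ : ℕ, ∀ T, T₀ ≤ T → q * ((T : ℝ) + 1) ≤ ({t | t ≤ T ∧ P t}.ncard : ℝ) := by
  refine ⟨⌈q / (1 - q)⌉₊, fun T hT => ?_⟩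
  have hIcc : Set.Icc 1 T ⊆ {t | t ≤ T ∧ P t} := fun t ht => by
    obtain ⟨d, rfl⟩ := Nat.exists_eq_add_of_le' ht.1
    exact ⟨ht.2, hP d⟩
  have hcard : T ≤ {t | t ≤ T ∧ P t}.ncard := by
    simpa using Set.ncard_le_ncard hIcc ((Set.finite_Iic T).subset fun t ht => ht.1)
  have hqT : q ≤ (1 - q) * T := by
    rw [← div_le_iff₀' (by linarith)]
    exact (Nat.le_ceil _).trans (by exact_mod_cast hT)
  calc q * ((T : ℝ) + 1) ≤ T := by linarith
    _ ≤ _ := by exact_mod_cast hcard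

section Cycle

variable {L : ℕ}

lemma iterate_apply_of_map_succ {α : Type*} {f : α → α} {γ : ZMod L → α}
    (hf : ∀ u, f (γ u) = γ (u + 1)) (u : ZMod L) (t : ℕ) : f^[t] (γ u) = γ (u + t) := by
  induction t with
  | zero => simp
  | succ t ih => rw [Function.iterate_succ_apply', ih, hf, Nat.cast_succ, add_assoc]

lemma attractor_eq_range [NeZero L] {N : ℕ} {f : BState N → BState N} {γ : ZMod L → BState N}
    (hf : ∀ u, f (γ u) = γ (u + 1)) {s : BState N} {k : ℕ} {u₀ : ZMod L}
    (hk : f^[k] s = γ u₀) : attractor f s = Set.range γ := by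
  have htraj : ∀ d, f^[d + k] s = γ (u₀ + d) := fun d => by
    rw [Function.iterate_add_apply, hk, iterate_apply_of_map_succ hf]
  ext x
  constructor
  · intro hx
    obtain ⟨t, ht, rfl⟩ := hx k
    obtain ⟨d, rfl⟩ := Nat.exists_eq_add_of_le' ht
    exact ⟨_, (htraj d).symm⟩
  · rintro ⟨v, rfl⟩ T
    refine ⟨T + (v - u₀ - T).val + k, by omega, ?_⟩
    rw [htraj]
    push_cast
    rw [ZMod.natCast_zmod_val]
    congr 1
    abel

variable [NeZero L] {N : ℕ} {γ : ZMod L → BState N}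

variable (γ) in
noncomputable def cycleNet (M : ZMod L) (s : BState N) : BState N :=
  if s ∈ Set.range γ then γ (Function.invFun γ s + 1) else γ (entry M s)

lemma cycleNet_apply (hγ : Function.Injective γ) (M u : ZMod L) :
    cycleNet γ M (γ u) = γ (u + 1) := by
  rw [cycleNet, if_pos (Set.mem_range_self u), Function.leftInverse_invFun hγ u]

lemma attractor_cycleNet (hγ : Function.Injective γ) (M : ZMod L) (s : BState N) :
    attractor (cycleNet γ M) s = Set.range γ := by
  obtain ⟨u₀, hu₀⟩ : ∃ u₀, cycleNet γ M s = γ u₀ := by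
    unfold cycleNet
    split_ifs <;> exact ⟨_, rfl⟩
  exact attractor_eq_range (cycleNet_apply hγ M) (k := 1) hu₀

lemma iterate_succ_cycleNet_of_notMem (hγ : Function.Injective γ) (M : ZMod L) {s : BState N}
    (hs : s ∉ Set.range γ) (t : ℕ) :
    (cycleNet γ M)^[t + 1] s = γ (entry M s + t) := by
  rw [Function.iterate_succ_apply, cycleNet, if_neg hs,
    iterate_apply_of_map_succ (cycleNet_apply hγ M)]

lemma hammingDist_iterate_cycleNet (hγ : Function.Injective γ) {M : ZMod L}
    (hM : ∀ u, γ (u + M) = fun i => !γ u i) {r : BState N × BState N}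
    (hr : r ∈ PerturbPairs N) (h₁ : r.1 ∉ Set.range γ) (h₂ : r.2 ∉ Set.range γ) (t : ℕ) :
    hammingDist ((cycleNet γ M)^[t + 1] r.1) ((cycleNet γ M)^[t + 1] r.2) = N := by
  have hMM : M + M = 0 := hγ <| by rw [hM, ← zero_add M, hM]; simp
  obtain ⟨j, hj⟩ := hammingDist_eq_one_iff.1 hr
  rw [iterate_succ_cycleNet_of_notMem hγ M h₁, iterate_succ_cycleNet_of_notMem hγ M h₂, ← hj,
    entry_flipAt hMM, add_right_comm, hM, hammingDist_not, Fintype.card_fin]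

lemma pcChaotic_cycleNet (hγ : Function.Injective γ) (M : ZMod L) {p c : ℝ} (hp : p < 1)
    (hc : c ^ N < L) : pcChaotic (cycleNet γ M) p c := by
  have hall : {s : BState N | c ^ N < ((attractor (cycleNet γ M) s).ncard : ℝ)} = Set.univ := by
    refine Set.eq_univ_of_forall fun s => ?_
    rwa [Set.mem_ofPred_eq, attractor_cycleNet hγ, Set.ncard_range_of_injective hγ,
      Nat.card_zmod]
  rw [pcChaotic, hall, Set.ncard_univ, Nat.card_fun, Nat.card_eq_fintype_card, Fintype.card_bool,
    Nat.card_eq_fintype_card, Fintype.card_fin]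
  push_cast
  nlinarith [pow_pos (two_pos (α := ℝ)) N]

lemma pAlphaQDecoherent_cycleNet (hγ : Function.Injective γ) {M : ZMod L}
    (hM : ∀ u, γ (u + M) = fun i => !γ u i) {p α q : ℝ} (hα : α ≤ 1) (hq : q < 1)
    (hL : 2 * (L : ℝ) ≤ (1 - p) * 2 ^ N) : pAlphaQDecoherent (cycleNet γ M) p α q := by
  set good := {r ∈ PerturbPairs N | r.1 ∉ Set.range γ ∧ r.2 ∉ Set.range γ}
  have hgood : good ⊆ {r ∈ PerturbPairs N | ∃ T₀ : ℕ, ∀ T : ℕ, T₀ ≤ T →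
      q * ((T : ℝ) + 1) ≤ ({t : ℕ | t ≤ T ∧ α * N ≤
        (hammingDist ((cycleNet γ M)^[t] r.1) ((cycleNet γ M)^[t] r.2) : ℝ)}.ncard : ℝ)} := by
    rintro r ⟨hr, h₁, h₂⟩
    refine ⟨hr, exists_forall_le_mul_succ_le_ncard (fun t => ?_) hq⟩
    rw [hammingDist_iterate_cycleNet hγ hM hr h₁ h₂]
    exact mul_le_of_le_one_left (Nat.cast_nonneg N) hα
  have hcount := le_ncard_perturbPairs_avoiding (Set.range γ)
  rw [Set.ncard_range_of_injective hγ, Nat.card_zmod] at hcount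
  have hcount' : ((2 : ℝ) ^ N * N) ≤ good.ncard + 2 * (L * N) := by exact_mod_cast hcount
  calc p * ((N : ℝ) * 2 ^ N) ≤ 2 ^ N * N - 2 * (L * N) := by
        nlinarith [Nat.cast_nonneg (α := ℝ) N]
    _ ≤ good.ncard := by linarith
    _ ≤ _ := by exact_mod_cast Set.ncard_le_ncard hgood (Set.toFinite _)

end Cycle

/-- Coordinate `j < m` is bit `j` of `u` xor bit `m`; the others are bit `m`. Adding `2 ^ m`
flips bit `m` alone, hence every coordinate. -/
def binaryCycle (m N : ℕ) (u : ZMod (2 ^ (m + 1))) : BState N := fun j =>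
  u.val.testBit m ^^ (decide ((j : ℕ) < m) && u.val.testBit j)

lemma binaryCycle_injective {m N : ℕ} (hmN : m < N) : Function.Injective (binaryCycle m N) := by
  intro u v h
  have htop : u.val.testBit m = v.val.testBit m := by
    simpa [binaryCycle] using congrFun h ⟨m, hmN⟩
  refine ZMod.val_injective _ (Nat.eq_of_testBit_eq fun i => ?_)
  rcases lt_trichotomy i m with hi | rfl | hi
  · simpa [binaryCycle, hi, htop] using congrFun h ⟨i, hi.trans hmN⟩
  · exact htop
  · have hlt : ∀ w : ZMod (2 ^ (m + 1)), w.val < 2 ^ i := fun w =>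
      (ZMod.val_lt w).trans_le (Nat.pow_le_pow_right two_pos hi)
    rw [Nat.testBit_lt_two_pow (hlt u), Nat.testBit_lt_two_pow (hlt v)]

lemma binaryCycle_add_two_pow (m N : ℕ) (u : ZMod (2 ^ (m + 1))) :
    binaryCycle m N (u + 2 ^ m) = fun j => !binaryCycle m N u j := by
  have hval : (u + 2 ^ m).val = (2 ^ m + u.val) % 2 ^ (m + 1) := by
    have h2m : ((2 : ZMod (2 ^ (m + 1))) ^ m).val = 2 ^ m := by
      exact_mod_cast ZMod.val_natCast_of_lt (Nat.pow_lt_pow_right one_lt_two m.lt_succ_self)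
    rw [ZMod.val_add, h2m, add_comm]
  funext j
  rcases lt_or_ge (j : ℕ) m with hj | hj
  · simp [binaryCycle, hval, Nat.testBit_two_pow_add_eq, Nat.testBit_two_pow_add_gt hj, hj,
      hj.trans m.lt_succ_self]
  · simp [binaryCycle, hval, Nat.testBit_two_pow_add_eq, hj.not_gt]

lemma eventually_mul_pow_lt_pow {b c : ℝ} (C : ℝ) (hc : 0 ≤ c) (hcb : c < b) :
    ∀ᶠ N in Filter.atTop, C * c ^ N < b ^ N := by
  have hb : 0 < b := hc.trans_lt hcb
  have hlim : Filter.Tendsto (fun N : ℕ => C * (c / b) ^ N) Filter.atTop (nhds 0) := by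
    simpa using (tendsto_pow_atTop_nhds_zero_of_lt_one (div_nonneg hc hb.le)
      ((div_lt_one hb).2 hcb)).const_mul C
  filter_upwards [hlim.eventually_lt_const one_pos] with N hN
  rwa [div_pow, mul_div_assoc', div_lt_one (pow_pos hb N)] at hN

end BooleanNetwork

theorem chaotic_alpha_q_decoherent_exists_general
    (α p q : ℝ) (hα1 : α < 1) (hp1 : p < 1)
    (hq1 : q < 1) (c : ℝ) (hc1 : 1 < c) (hc2 : c < 2) :
    ∃ N₀ : ℕ, ∀ N : ℕ, N₀ ≤ N →
      ∃ f : BState N → BState N,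
        pcChaotic f p c ∧ pAlphaQDecoherent f p α q := by
  obtain ⟨k, hk⟩ : ∃ k : ℕ, 2 / (1 - p) < 2 ^ k := pow_unbounded_of_one_lt _ one_lt_two
  rw [div_lt_iff₀ (by linarith)] at hk
  obtain ⟨N₀, hN₀⟩ := Filter.eventually_atTop.1
    ((BooleanNetwork.eventually_mul_pow_lt_pow (2 ^ k) (by linarith) hc2).and
      (Filter.eventually_gt_atTop k))
  refine ⟨N₀, fun N hN => ?_⟩
  obtain ⟨hc, hkN⟩ := hN₀ N hN
  obtain ⟨m, rfl⟩ : ∃ m, N = m + 1 + k := ⟨N - k - 1, by omega⟩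
  have hsplit : (2 : ℝ) ^ (m + 1 + k) = 2 ^ (m + 1) * 2 ^ k := pow_add _ _ _
  have hγ := BooleanNetwork.binaryCycle_injective (N := m + 1 + k) (m := m) (by omega)
  refine ⟨BooleanNetwork.cycleNet (BooleanNetwork.binaryCycle m _) (2 ^ m),
    BooleanNetwork.pcChaotic_cycleNet hγ _ hp1 ?_,
    BooleanNetwork.pAlphaQDecoherent_cycleNet hγ (BooleanNetwork.binaryCycle_add_two_pow m _)
      hα1.le hq1 ?_⟩
  · push_cast
    nlinarith [pow_pos (two_pos (α := ℝ)) k]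
  · push_cast
    nlinarith [pow_pos (two_pos (α := ℝ)) (m + 1)]

/-- Proposition 3.5: for `0 < α, p, q < 1` and `1 < c < 2`, all sufficiently large `N`
admit a (not necessarily cooperative) `p`-`c`-chaotic, `p`-`α`-`q`-decoherent network. -/
theorem chaotic_alpha_q_decoherent_exists
    (α p q : ℝ) (hα0 : 0 < α) (hα1 : α < 1) (hp0 : 0 < p) (hp1 : p < 1)
    (hq0 : 0 < q) (hq1 : q < 1) (c : ℝ) (hc1 : 1 < c) (hc2 : c < 2) :
    ∃ N₀ : ℕ, ∀ N : ℕ, N₀ ≤ N →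
      ∃ f : BState N → BState N,
        pcChaotic f p c ∧ pAlphaQDecoherent f p α q :=
  chaotic_alpha_q_decoherent_exists_general α p q hα1 hp1 hq1 c hc1 hc2
end

section
/- For every real α > 0 and every real p with 0 < p < 1 there exists N₀ such that for every cooperative Boolean network f of dimension N ≥ N₀ and every time t > 0, the number of perturbation pairs (s(0), s*(0)) satisfying H(f^[t](s(0)), f^[t](s*(0))) ≥ αN is strictly less than p·N·2^N. -/
/-! Since `f^[t]` is monotone and `s`, `flipCoord s i` are comparable, the Hamming distance of
their images is the difference of the weights (numbers of `true` coordinates) of the images.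
Summing over all perturbation pairs and pairing `s` with `flipCoord s i`, the total separation
becomes `2 ∑ₛ weight (f^[t] s) · m(s)`, where `m(s) = ∑ᵢ ±1` is the magnetization. As the weight
is at most `N`, and `∑ₛ |m(s)| ≤ 2^N √N` by Cauchy–Schwarz and orthogonality of the spins, the
total separation is at most `2 N 2^N √N`. Markov's inequality then bounds the number of pairs
separated by `αN` by `2 · 2^N √N / α`, which is `o(N 2^N)`. -/

open Finset

section Weight

variable {ι : Type*} [Fintype ι]

def weight (s : ι → Bool) : ℕ := #{i | s i}

lemma weight_le_card (s : ι → Bool) : weight s ≤ Fintype.card ι := card_filter_le _ _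

lemma hammingDist_eq_weight_sub_weight_of_le {u v : ι → Bool} (h : u ≤ v) :
    (hammingDist u v : ℝ) = weight v - weight u := by
  simp only [hammingDist, weight, ← Finset.sum_boole, ← Finset.sum_sub_distrib]
  refine Finset.sum_congr rfl fun i _ => ?_
  have := h i
  revert this
  cases u i <;> cases v i <;> simp

lemma weight_mono : Monotone (weight : (ι → Bool) → ℕ) := fun u v h =>
  card_le_card fun i hi => by
    simpa using Bool.eq_true_of_true_le ((mem_filter.mp hi).2.symm.trans_le (h i))

lemma hammingDist_eq_abs_weight_sub_weight {u v : ι → Bool} (h : u ≤ v ∨ v ≤ u) :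
    (hammingDist u v : ℝ) = |(weight v : ℝ) - weight u| := by
  rcases h with h | h
  · rw [hammingDist_eq_weight_sub_weight_of_le h, abs_of_nonneg]
    exact sub_nonneg.mpr (Nat.cast_le.mpr (weight_mono h))
  · rw [hammingDist_comm, hammingDist_eq_weight_sub_weight_of_le h, abs_sub_comm, abs_of_nonneg]
    exact sub_nonneg.mpr (Nat.cast_le.mpr (weight_mono h))

end Weight

section FlipCoord

variable {ι : Type*} [DecidableEq ι]

def flipCoord (s : ι → Bool) (i : ι) : ι → Bool := Function.update s i (!s i)

lemma flipCoord_flipCoord (s : ι → Bool) (i : ι) : flipCoord (flipCoord s i) i = s := by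
  simp [flipCoord]

lemma le_flipCoord {s : ι → Bool} {i : ι} (h : s i = false) : s ≤ flipCoord s i := by
  intro j; by_cases hj : j = i <;> simp_all [flipCoord]

lemma flipCoord_le {s : ι → Bool} {i : ι} (h : s i = true) : flipCoord s i ≤ s := by
  intro j; by_cases hj : j = i <;> simp_all [flipCoord]

lemma le_or_le_flipCoord (s : ι → Bool) (i : ι) : s ≤ flipCoord s i ∨ flipCoord s i ≤ s := by
  cases hs : s i
  · exact .inl (le_flipCoord hs)
  · exact .inr (flipCoord_le hs)

variable [Fintype ι]

lemma sum_comp_flipCoord {M : Type*} [AddCommMonoid M] (g : (ι → Bool) → M) (i : ι) :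
    ∑ s, g (flipCoord s i) = ∑ s, g s :=
  Equiv.sum_comp (Function.Involutive.toPerm _ (flipCoord_flipCoord · i)) g

lemma exists_eq_flipCoord_of_hammingDist_eq_one {s s' : ι → Bool} (h : hammingDist s s' = 1) :
    ∃ i, s' = flipCoord s i := by
  obtain ⟨i, hi⟩ := Finset.card_eq_one.mp h
  refine ⟨i, funext fun j => ?_⟩
  have hj := Finset.ext_iff.mp hi j
  simp only [mem_filter, mem_univ, true_and, mem_singleton] at hj
  by_cases hji : j = i
  · subst hji
    simp only [flipCoord, Function.update_self]
    revert hj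
    cases s j <;> cases s' j <;> simp
  · simp_all [flipCoord]

end FlipCoord

section Spin

variable {ι : Type*}

def spin (s : ι → Bool) (i : ι) : ℝ := if s i then 1 else -1

lemma spin_mul_self (s : ι → Bool) (i : ι) : spin s i * spin s i = 1 := by
  cases h : s i <;> simp [spin, h]

variable [DecidableEq ι]

lemma spin_flipCoord_self (s : ι → Bool) (i : ι) : spin (flipCoord s i) i = -spin s i := by
  cases h : s i <;> simp [spin, flipCoord, h]

lemma spin_flipCoord_of_ne (s : ι → Bool) {i j : ι} (h : j ≠ i) :
    spin (flipCoord s i) j = spin s j := by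
  simp [spin, flipCoord, h]

variable [Fintype ι]

lemma sum_spin_mul_spin_of_ne {i j : ι} (h : i ≠ j) : ∑ s : ι → Bool, spin s i * spin s j = 0 := by
  have hflip := sum_comp_flipCoord (fun s => spin s i * spin s j) j
  simp only [spin_flipCoord_self, spin_flipCoord_of_ne _ h, mul_neg, sum_neg_distrib] at hflip
  linarith

def magnetization (s : ι → Bool) : ℝ := ∑ i, spin s i

lemma sum_magnetization_sq :
    ∑ s : ι → Bool, magnetization s ^ 2 = Fintype.card ι * 2 ^ Fintype.card ι := by
  have hdiag (i : ι) : ∑ s : ι → Bool, ∑ j, spin s i * spin s j = 2 ^ Fintype.card ι := by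
    rw [sum_comm, sum_eq_single_of_mem i (mem_univ i) fun j _ hji => sum_spin_mul_spin_of_ne hji.symm]
    simp [spin_mul_self]
  simp only [magnetization, sq, sum_mul_sum]
  rw [sum_comm, sum_congr rfl fun i _ => hdiag i]
  simp

lemma sum_abs_magnetization_le :
    ∑ s : ι → Bool, |magnetization s| ≤ 2 ^ Fintype.card ι * √(Fintype.card ι) := by
  have hcs := Real.sum_mul_le_sqrt_mul_sqrt (univ : Finset (ι → Bool)) (fun _ => 1)
    (fun s => |magnetization s|)
  simp only [one_mul, one_pow, sum_const, card_univ, Fintype.card_fun, Fintype.card_bool, sq_abs,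
    sum_magnetization_sq, nsmul_eq_mul, mul_one] at hcs
  calc _ ≤ _ := hcs
    _ = 2 ^ Fintype.card ι * √(Fintype.card ι) := by
      rw [Real.sqrt_mul (by positivity), ← mul_assoc, mul_comm _ √(2 ^ _)]
      push_cast
      rw [← mul_assoc, Real.mul_self_sqrt (by positivity)]

end Spin

section Sensitivity

variable {ι κ : Type*} [DecidableEq ι] [Fintype ι]

lemma sum_abs_sub_flipCoord_eq {G : (ι → Bool) → ℝ} (hG : Monotone G) (i : ι) :
    ∑ s, |G (flipCoord s i) - G s| = 2 * ∑ s, spin s i * G s := by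
  have hpoint (s : ι → Bool) :
      |G (flipCoord s i) - G s| = spin s i * G s + spin (flipCoord s i) i * G (flipCoord s i) := by
    rw [spin_flipCoord_self]
    cases hs : s i
    · rw [abs_of_nonneg (sub_nonneg.mpr (hG (le_flipCoord hs)))]
      simp [spin, hs]; ring
    · rw [abs_of_nonpos (sub_nonpos.mpr (hG (flipCoord_le hs)))]
      simp [spin, hs]; ring
  rw [sum_congr rfl fun s _ => hpoint s, sum_add_distrib,
    sum_comp_flipCoord (fun s => spin s i * G s) i]
  ring

lemma sum_sum_hammingDist_flipCoord_le [Fintype κ] {F : (ι → Bool) → κ → Bool} (hF : Monotone F) :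
    ∑ s, ∑ i, (hammingDist (F s) (F (flipCoord s i)) : ℝ)
      ≤ 2 * Fintype.card κ * 2 ^ Fintype.card ι * √(Fintype.card ι) := by
  set G : (ι → Bool) → ℝ := fun s => weight (F s)
  have hG : Monotone G := Nat.mono_cast.comp (weight_mono.comp hF)
  have hGle (s : ι → Bool) : G s * magnetization s ≤ Fintype.card κ * |magnetization s| :=
    calc G s * magnetization s ≤ G s * |magnetization s| :=
          mul_le_mul_of_nonneg_left (le_abs_self _) (Nat.cast_nonneg _)
      _ ≤ Fintype.card κ * |magnetization s| :=
          mul_le_mul_of_nonneg_right (Nat.cast_le.mpr (weight_le_card (F s))) (abs_nonneg _)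
  calc ∑ s, ∑ i, (hammingDist (F s) (F (flipCoord s i)) : ℝ)
      = ∑ i, ∑ s, |G (flipCoord s i) - G s| := by
        rw [sum_comm]
        refine sum_congr rfl fun i _ => sum_congr rfl fun s _ => ?_
        exact hammingDist_eq_abs_weight_sub_weight ((le_or_le_flipCoord s i).imp (hF ·) (hF ·))
    _ = 2 * ∑ s, G s * magnetization s := by
        simp only [sum_abs_sub_flipCoord_eq hG, magnetization, mul_sum]
        rw [sum_comm]
        simp only [mul_comm (spin _ _)]
    _ ≤ 2 * (Fintype.card κ * ∑ s, |magnetization s|) := by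
        gcongr 2 * ?_
        rw [mul_sum]
        exact sum_le_sum fun s _ => hGle s
    _ ≤ 2 * (Fintype.card κ * (2 ^ Fintype.card ι * √(Fintype.card ι))) := by
        gcongr; exact sum_abs_magnetization_le
    _ = _ := by ring

end Sensitivity

lemma ncard_perturbPairs_mul_le_sum {N : ℕ} (h : BState N × BState N → ℝ) (hh : ∀ q, 0 ≤ h q)
    {a : ℝ} (ha : 0 ≤ a) :
    ({q ∈ PerturbPairs N | a ≤ h q}.ncard : ℝ) * a ≤ ∑ s, ∑ i, h (s, flipCoord s i) := by
  set φ : BState N × Fin N → BState N × BState N := fun p => (p.1, flipCoord p.1 p.2)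
  have hsub : {q ∈ PerturbPairs N | a ≤ h q} ⊆ φ '' {p | a ≤ h (φ p)} := by
    rintro ⟨s, s'⟩ ⟨hq, has⟩
    obtain ⟨i, rfl⟩ : ∃ i, s' = flipCoord s i := exists_eq_flipCoord_of_hammingDist_eq_one hq
    exact ⟨(s, i), has, rfl⟩
  have hcard : {q ∈ PerturbPairs N | a ≤ h q}.ncard ≤ #{p | a ≤ h (φ p)} :=
    calc _ ≤ (φ '' {p | a ≤ h (φ p)}).ncard := Set.ncard_le_ncard hsub
      _ ≤ {p | a ≤ h (φ p)}.ncard := Set.ncard_image_le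
      _ = _ := by rw [Set.ncard_eq_toFinset_card', Set.toFinset_ofPred]
  calc _ ≤ (#{p | a ≤ h (φ p)} : ℝ) * a := by gcongr
    _ ≤ ∑ p with a ≤ h (φ p), h (φ p) := by
        rw [← nsmul_eq_mul]
        exact card_nsmul_le_sum _ _ _ fun p hp => (mem_filter.mp hp).2
    _ ≤ ∑ p, h (φ p) := sum_le_sum_of_subset_of_nonneg (filter_subset _ _) fun _ _ _ => hh _
    _ = ∑ s, ∑ i, h (s, flipCoord s i) := Fintype.sum_prod_type _

lemma exists_forall_two_mul_sqrt_lt_mul {c : ℝ} (hc : 0 < c) :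
    ∃ N₀ : ℕ, ∀ N : ℕ, N₀ ≤ N → 2 * √N < c * N := by
  refine ⟨⌈(2 / c) ^ 2⌉₊ + 1, fun N hN => ?_⟩
  have hlt : 2 / c < √N := by
    rw [Real.lt_sqrt (by positivity)]
    exact (Nat.le_ceil _).trans_lt (by exact_mod_cast hN)
  have hsqrt : 0 < √N := (div_pos two_pos hc).trans hlt
  calc 2 * √N < c * √N * √N := by
        gcongr; rwa [div_lt_iff₀ hc, mul_comm] at hlt
    _ = c * N := by rw [mul_assoc, Real.mul_self_sqrt (Nat.cast_nonneg N)]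

theorem cooperative_fixed_time_separation_rare_general
    (α p : ℝ) (hα : 0 < α) (hp0 : 0 < p) :
    ∃ N₀ : ℕ, ∀ N : ℕ, N₀ ≤ N →
      ∀ f : BState N → BState N, Monotone f →
        ∀ t : ℕ, 0 < t →
          (({q ∈ PerturbPairs N |
              α * N ≤ (hammingDist (f^[t] q.1) (f^[t] q.2) : ℝ)}).ncard : ℝ)
            < p * ((N : ℝ) * 2 ^ N) := by
  obtain ⟨N₀, hN₀⟩ := exists_forall_two_mul_sqrt_lt_mul (mul_pos hα hp0)
  refine ⟨N₀ + 1, fun N hN f hf t _ => ?_⟩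
  have hNpos : (0 : ℝ) < N := by exact_mod_cast (Nat.succ_pos N₀).trans_le hN
  have hmarkov := ncard_perturbPairs_mul_le_sum (fun q => (hammingDist (f^[t] q.1) (f^[t] q.2) : ℝ))
    (fun _ => Nat.cast_nonneg _) (mul_pos hα hNpos).le
  have hsens := sum_sum_hammingDist_flipCoord_le (hf.iterate t)
  simp only [Fintype.card_fin] at hsens
  have hsqrt := hN₀ N (by omega)
  refine lt_of_mul_lt_mul_right ?_ (mul_pos hα hNpos).le
  calc _ ≤ _ := hmarkov
    _ ≤ _ := hsens
    _ < 2 * N * 2 ^ N * ((α * p * N) / 2) := by gcongr; linarith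
    _ = p * (N * 2 ^ N) * (α * N) := by ring

/-- Theorem 3.6, first part: in a cooperative Boolean network of sufficiently large
dimension, for every fixed time `t > 0`, fewer than `p·N·2^N` perturbation pairs have
Hamming distance `≥ α·N` at time `t`. -/
theorem cooperative_fixed_time_separation_rare
    (α p : ℝ) (hα : 0 < α) (hp0 : 0 < p) (hp1 : p < 1) :
    ∃ N₀ : ℕ, ∀ N : ℕ, N₀ ≤ N →
      ∀ f : BState N → BState N, Monotone f →
        ∀ t : ℕ, 0 < t →
          (({q ∈ PerturbPairs N |
              α * N ≤ (hammingDist (f^[t] q.1) (f^[t] q.2) : ℝ)}).ncard : ℝ)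
            < p * ((N : ℝ) * 2 ^ N) :=
  cooperative_fixed_time_separation_rare_general α p hα hp0
end

section
/- For all real numbers α, p, q with 0 < α < 1, 0 < p < 1, 0 < q < 1, there exists N₀ such that no cooperative Boolean network of dimension N ≥ N₀ exhibits p-α-q-decoherence. -/
namespace CoopAux

variable {N : ℕ}

/-- weight: number of true coordinates -/
def wt (s : BState N) : ℕ := (Finset.univ.filter (fun i => s i = true)).card

def eps (i : Fin N) (s : BState N) : ℝ := if s i then 1 else -1

def flip (i : Fin N) (s : BState N) : BState N := Function.update s i (!(s i))

lemma wt_le (s : BState N) : wt s ≤ N := by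
  classical
  calc wt s ≤ Finset.univ.card := Finset.card_filter_le _ _
  _ = N := by simp

lemma wt_add_hamming {x y : BState N} (h : x ≤ y) :
    wt x + hammingDist x y = wt y := by
  classical
  unfold wt
  rw [hammingDist, Finset.card_filter, Finset.card_filter, Finset.card_filter,
    ← Finset.sum_add_distrib]
  refine Finset.sum_congr rfl (fun i _ => ?_)
  have hle : x i ≤ y i := h i
  cases hx : x i <;> cases hy : y i <;> simp_all <;> exact absurd hle (by decide)

lemma flip_apply_same (i : Fin N) (s : BState N) : flip i s i = !(s i) := by
  simp [flip]

lemma flip_apply_ne {i k : Fin N} (h : k ≠ i) (s : BState N) : flip i s k = s k := by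
  simp [flip, Function.update_of_ne h]

lemma flip_flip (i : Fin N) (s : BState N) : flip i (flip i s) = s := by
  funext k
  show flip i (flip i s) k = s k
  by_cases h : k = i
  · subst h; simp [flip_apply_same]
  · rw [flip_apply_ne h, flip_apply_ne h]

lemma flip_involutive (i : Fin N) : Function.Involutive (flip i : BState N → BState N) :=
  fun s => flip_flip i s

lemma hammingDist_flip (i : Fin N) (s : BState N) : hammingDist s (flip i s) = 1 := by
  classical
  rw [hammingDist]
  have : (Finset.univ.filter (fun k => s k ≠ flip i s k)) = {i} := by
    ext k
    simp only [Finset.mem_filter, Finset.mem_univ, true_and, Finset.mem_singleton]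
    constructor
    · intro hk
      by_contra hki
      exact hk (flip_apply_ne hki s).symm
    · intro hk; subst hk
      rw [flip_apply_same]
      cases s k <;> decide
  rw [this, Finset.card_singleton]

lemma update_le_update (i : Fin N) (s : BState N) :
    Function.update s i false ≤ Function.update s i true := by
  intro k
  by_cases h : k = i
  · subst h; simp
  · rw [Function.update_of_ne h, Function.update_of_ne h]

/-- key reindexing: sum over cube of h ∘ flip i equals sum of h -/
lemma sum_flip (i : Fin N) (h : BState N → ℝ) :
    ∑ s : BState N, h (flip i s) = ∑ s : BState N, h s :=
  Fintype.sum_bijective (flip i) (flip_involutive i).bijective _ _ (fun s => rfl)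

lemma eps_flip_same (i : Fin N) (s : BState N) : eps i (flip i s) = - eps i s := by
  unfold eps
  rw [flip_apply_same]
  cases s i <;> simp

lemma eps_flip_ne {i j : Fin N} (h : i ≠ j) (s : BState N) : eps i (flip j s) = eps i s := by
  unfold eps
  rw [flip_apply_ne h]

/-- Hamming distance between images of comparable states, as difference of weights. -/
lemma hamming_pair (f : BState N → BState N) (hf : Monotone f) (t : ℕ) (s : BState N) (i : Fin N) :
    (hammingDist (f^[t] s) (f^[t] (flip i s)) : ℝ) =
      (wt (f^[t] (Function.update s i true)) : ℝ) - (wt (f^[t] (Function.update s i false)) : ℝ) := by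
  classical
  set u := Function.update s i false
  set v := Function.update s i true
  have huv : f^[t] u ≤ f^[t] v := (hf.iterate t) (update_le_update i s)
  have key : (wt (f^[t] u) : ℝ) + (hammingDist (f^[t] u) (f^[t] v) : ℝ) = (wt (f^[t] v) : ℝ) := by
    exact_mod_cast congrArg (Nat.cast (R := ℝ)) (wt_add_hamming huv)
  have hpair : hammingDist (f^[t] s) (f^[t] (flip i s)) = hammingDist (f^[t] u) (f^[t] v) := by
    cases hsi : s i
    · have hs : u = s := by
        funext k; by_cases h : k = i
        · subst h; simp [u, hsi]
        · simp [u, Function.update_of_ne h]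
      have hv : v = flip i s := by
        funext k; by_cases h : k = i
        · subst h; simp [v, flip_apply_same, hsi]
        · simp [v, Function.update_of_ne h, flip_apply_ne h]
      rw [hs, hv]
    · have hs : v = s := by
        funext k; by_cases h : k = i
        · subst h; simp [v, hsi]
        · simp [v, Function.update_of_ne h]
      have hu : u = flip i s := by
        funext k; by_cases h : k = i
        · subst h; simp [u, flip_apply_same, hsi]
        · simp [u, Function.update_of_ne h, flip_apply_ne h]
      rw [hs, hu, hammingDist_comm]
  rw [hpair]
  linarith [key]

/-- Per-coordinate sum identity. -/
lemma sum_update_diff (i : Fin N) (g : BState N → ℝ) :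
    ∑ s : BState N, (g (Function.update s i true) - g (Function.update s i false)) =
      2 * ∑ s : BState N, eps i s * g s := by
  classical
  have hpt : ∀ s : BState N,
      g (Function.update s i true) - g (Function.update s i false) =
        eps i s * g s - eps i s * g (flip i s) := by
    intro s
    cases hsi : s i
    · have h1 : Function.update s i true = flip i s := by
        funext k; by_cases h : k = i
        · subst h; simp [flip_apply_same, hsi]
        · simp [Function.update_of_ne h, flip_apply_ne h]
      have h2 : Function.update s i false = s := by
        funext k; by_cases h : k = i
        · subst h; simp [hsi]
        · simp [Function.update_of_ne h]
      rw [h1, h2]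
      simp only [eps, hsi, if_true, if_false, Bool.false_eq_true]
      ring
    · have h1 : Function.update s i true = s := by
        funext k; by_cases h : k = i
        · subst h; simp [hsi]
        · simp [Function.update_of_ne h]
      have h2 : Function.update s i false = flip i s := by
        funext k; by_cases h : k = i
        · subst h; simp [flip_apply_same, hsi]
        · simp [Function.update_of_ne h, flip_apply_ne h]
      rw [h1, h2]
      simp only [eps, hsi, if_true, if_false, Bool.false_eq_true]
      ring
  rw [Finset.sum_congr rfl (fun s _ => hpt s), Finset.sum_sub_distrib]
  have hre : ∑ s : BState N, eps i s * g (flip i s) = - ∑ s : BState N, eps i s * g s := by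
    have := sum_flip i (fun x => eps i x * g (flip i x))
    calc ∑ s : BState N, eps i s * g (flip i s)
        = ∑ s : BState N, eps i (flip i s) * g (flip i (flip i s)) := this.symm
      _ = ∑ s : BState N, (- eps i s) * g s := by
          refine Finset.sum_congr rfl (fun s _ => ?_)
          rw [eps_flip_same, flip_flip]
      _ = - ∑ s : BState N, eps i s * g s := by
          rw [← Finset.sum_neg_distrib]
          exact Finset.sum_congr rfl (fun s _ => by ring)
  rw [hre]
  ring

lemma card_cube : (Fintype.card (BState N) : ℝ) = 2 ^ N := by
  rw [Fintype.card_fun]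
  simp

lemma sum_eps_sq : ∑ s : BState N, (∑ i : Fin N, eps i s) ^ 2 = (N : ℝ) * 2 ^ N := by
  classical
  have expand : ∀ s : BState N, (∑ i : Fin N, eps i s) ^ 2
      = ∑ i : Fin N, ∑ j : Fin N, eps i s * eps j s := by
    intro s
    rw [sq, Finset.sum_mul_sum]
  rw [Finset.sum_congr rfl (fun s _ => expand s)]
  rw [Finset.sum_comm]
  have inner : ∀ i : Fin N, ∑ s : BState N, ∑ j : Fin N, eps i s * eps j s = (2 : ℝ) ^ N := by
    intro i
    rw [Finset.sum_comm]
    have hdiag : ∑ s : BState N, eps i s * eps i s = (2 : ℝ) ^ N := by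
      have : ∀ s : BState N, eps i s * eps i s = 1 := by
        intro s; unfold eps; cases s i <;> simp
      rw [Finset.sum_congr rfl (fun s _ => this s), Finset.sum_const, nsmul_eq_mul, mul_one,
        ← card_cube]
      rfl
    have hoff : ∀ j : Fin N, j ≠ i → ∑ s : BState N, eps i s * eps j s = 0 := by
      intro j hj
      have hr := sum_flip j (fun x => eps i x * eps j x)
      have : ∑ s : BState N, eps i (flip j s) * eps j (flip j s)
          = ∑ s : BState N, (- (eps i s * eps j s)) := by
        refine Finset.sum_congr rfl (fun s _ => ?_)
        rw [eps_flip_ne (fun h => hj h.symm), eps_flip_same]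
        ring
      rw [this, Finset.sum_neg_distrib] at hr
      linarith [hr]
    calc ∑ j : Fin N, ∑ s : BState N, eps i s * eps j s
        = ∑ s : BState N, eps i s * eps i s := Finset.sum_eq_single i
          (fun j _ hj => hoff j hj) (by simp)
      _ = (2 : ℝ) ^ N := hdiag
  rw [Finset.sum_congr rfl (fun i _ => inner i), Finset.sum_const, nsmul_eq_mul]
  simp

/-- Cauchy–Schwarz bound on the correlation of a bounded function with the discrepancy. -/
lemma corr_bound (g : BState N → ℝ) (hg0 : ∀ s, 0 ≤ g s) (hgN : ∀ s, g s ≤ N) :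
    ∑ s : BState N, g s * (∑ i : Fin N, eps i s) ≤ (N : ℝ) * Real.sqrt N * 2 ^ N := by
  classical
  set A := ∑ s : BState N, g s * (∑ i : Fin N, eps i s) with hA
  have hcs := Finset.sum_mul_sq_le_sq_mul_sq Finset.univ g (fun s => ∑ i : Fin N, eps i s)
  have hg2 : ∑ s : BState N, (g s) ^ 2 ≤ (N : ℝ) ^ 2 * 2 ^ N := by
    calc ∑ s : BState N, (g s) ^ 2 ≤ ∑ _s : BState N, (N : ℝ) ^ 2 := by
          refine Finset.sum_le_sum (fun s _ => ?_)
          exact pow_le_pow_left₀ (hg0 s) (hgN s) 2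
      _ = (N : ℝ) ^ 2 * 2 ^ N := by
          rw [Finset.sum_const, nsmul_eq_mul, Finset.card_univ, card_cube]; ring
  have hsq : A ^ 2 ≤ ((N : ℝ) * Real.sqrt N * 2 ^ N) ^ 2 := by
    have hrhs : ((N : ℝ) * Real.sqrt N * 2 ^ N) ^ 2 = (N : ℝ) ^ 2 * 2 ^ N * ((N : ℝ) * 2 ^ N) := by
      have h : Real.sqrt N ^ 2 = (N : ℝ) := Real.sq_sqrt (Nat.cast_nonneg N)
      calc ((N : ℝ) * Real.sqrt N * 2 ^ N) ^ 2
          = (N:ℝ)^2 * (Real.sqrt N ^ 2) * ((2:ℝ)^N)^2 := by ring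
        _ = (N : ℝ) ^ 2 * 2 ^ N * ((N : ℝ) * 2 ^ N) := by rw [h]; ring
    rw [hrhs]
    calc A ^ 2 ≤ (∑ s : BState N, (g s) ^ 2) * ∑ s : BState N, (∑ i : Fin N, eps i s) ^ 2 := hcs
      _ = (∑ s : BState N, (g s) ^ 2) * ((N : ℝ) * 2 ^ N) := by rw [sum_eps_sq]
      _ ≤ (N : ℝ) ^ 2 * 2 ^ N * ((N : ℝ) * 2 ^ N) := by
          have hN2 : (0 : ℝ) ≤ (N : ℝ) * 2 ^ N := by positivity
          exact mul_le_mul_of_nonneg_right hg2 hN2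
  have hrhs_nonneg : (0 : ℝ) ≤ (N : ℝ) * Real.sqrt N * 2 ^ N := by positivity
  nlinarith [hsq, hrhs_nonneg]

/-- The finset of ordered perturbation pairs. -/
noncomputable def PP (N : ℕ) : Finset (BState N × BState N) :=
  Finset.univ.filter (fun q => hammingDist q.1 q.2 = 1)

lemma sum_pairs (F : BState N × BState N → ℝ) :
    ∑ q ∈ PP N, F q = ∑ s : BState N, ∑ i : Fin N, F (s, flip i s) := by
  classical
  rw [show (∑ s : BState N, ∑ i : Fin N, F (s, flip i s)) = ∑ a : BState N × Fin N, F (a.1, flip a.2 a.1) from (Fintype.sum_prod_type (f := fun a : BState N × Fin N => F (a.1, flip a.2 a.1))).symm]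
  refine (Finset.sum_bij (fun (a : BState N × Fin N) _ => (a.1, flip a.2 a.1)) ?_ ?_ ?_ ?_).symm
  · intro a _
    simp only [PP, Finset.mem_filter, Finset.mem_univ, true_and]
    exact hammingDist_flip a.2 a.1
  · intro a₁ _ a₂ _ h
    have h' : (a₁.1, flip a₁.2 a₁.1) = (a₂.1, flip a₂.2 a₂.1) := h
    obtain ⟨h1, h2⟩ := Prod.mk.inj h'
    rw [← h1] at h2
    have hij : a₁.2 = a₂.2 := by
      by_contra hne
      have e1 := flip_apply_same a₁.2 a₁.1
      have e2 : flip a₂.2 a₁.1 a₁.2 = a₁.1 a₁.2 := flip_apply_ne hne a₁.1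
      rw [h2, e2] at e1
      cases a₁.1 a₁.2 <;> simp_all
    exact Prod.ext h1 hij
  · intro q hq
    simp only [PP, Finset.mem_filter, Finset.mem_univ, true_and] at hq
    rw [hammingDist] at hq
    obtain ⟨i, hi⟩ := Finset.card_eq_one.mp hq
    refine ⟨(q.1, i), Finset.mem_univ _, ?_⟩
    have hq2 : q.2 = flip i q.1 := by
      funext k
      by_cases h : k = i
      · subst h
        have hk : k ∈ Finset.univ.filter (fun k => q.1 k ≠ q.2 k) := by
          rw [hi]; exact Finset.mem_singleton_self k
        simp only [Finset.mem_filter, Finset.mem_univ, true_and] at hk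
        rw [flip_apply_same]
        cases h1 : q.1 k <;> cases h2 : q.2 k <;> simp_all
      · have hk : k ∉ Finset.univ.filter (fun k => q.1 k ≠ q.2 k) := by
          rw [hi]; simp [h]
        simp only [Finset.mem_filter, Finset.mem_univ, true_and, not_not] at hk
        rw [flip_apply_ne h, ← hk]
    exact Prod.ext rfl hq2.symm
  · intro a _; rfl

/-- Per-time upper bound on the total Hamming distance over all perturbation pairs. -/
lemma per_time_bound (f : BState N → BState N) (hf : Monotone f) (t : ℕ) :
    ∑ q ∈ PP N, (hammingDist (f^[t] q.1) (f^[t] q.2) : ℝ)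
      ≤ 2 * ((N : ℝ) * Real.sqrt N * 2 ^ N) := by
  classical
  set g : BState N → ℝ := fun x => (wt (f^[t] x) : ℝ) with hg
  rw [sum_pairs (fun q => (hammingDist (f^[t] q.1) (f^[t] q.2) : ℝ))]
  have step1 : ∀ s : BState N, ∀ i : Fin N,
      (hammingDist (f^[t] s) (f^[t] (flip i s)) : ℝ)
        = g (Function.update s i true) - g (Function.update s i false) :=
    fun s i => hamming_pair f hf t s i
  calc ∑ s : BState N, ∑ i : Fin N, (hammingDist (f^[t] s) (f^[t] (flip i s)) : ℝ)
      = ∑ i : Fin N, ∑ s : BState N,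
          (g (Function.update s i true) - g (Function.update s i false)) := by
        rw [Finset.sum_comm]
        exact Finset.sum_congr rfl (fun i _ => Finset.sum_congr rfl (fun s _ => step1 s i))
    _ = ∑ i : Fin N, 2 * ∑ s : BState N, eps i s * g s := by
        exact Finset.sum_congr rfl (fun i _ => sum_update_diff i g)
    _ = 2 * ∑ s : BState N, g s * (∑ i : Fin N, eps i s) := by
        rw [← Finset.mul_sum, Finset.sum_comm]
        congr 1
        refine Finset.sum_congr rfl (fun s _ => ?_)
        rw [Finset.mul_sum]
        exact Finset.sum_congr rfl (fun i _ => by ring)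
    _ ≤ 2 * ((N : ℝ) * Real.sqrt N * 2 ^ N) := by
        have := corr_bound g (fun s => by positivity) (fun s => by
          exact_mod_cast Nat.cast_le.mpr (wt_le (f^[t] s)))
        linarith

end CoopAux

open CoopAux

/-- Theorem 3.6, second part: cooperativity precludes `p`-`α`-`q`-decoherence in all
sufficiently large dimensions. -/
theorem cooperative_precludes_alpha_q_decoherence
    (α p q : ℝ) (hα0 : 0 < α) (hα1 : α < 1) (hp0 : 0 < p) (hp1 : p < 1)
    (hq0 : 0 < q) (hq1 : q < 1) :
    ∃ N₀ : ℕ, ∀ N : ℕ, N₀ ≤ N →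
      ∀ f : BState N → BState N, Monotone f → ¬ pAlphaQDecoherent f p α q := by
  classical
  set d : ℝ := p * q * α with hd
  have hd0 : 0 < d := by positivity
  refine ⟨⌈(2 / d) ^ 2⌉₊ + 1, fun N hN f hf hdec => ?_⟩
  have hNC : ((2 / d) ^ 2 : ℝ) < N := by
    have h1 : ((2 / d) ^ 2 : ℝ) ≤ (⌈(2 / d) ^ 2⌉₊ : ℝ) := Nat.le_ceil _
    have h2 : (⌈(2 / d) ^ 2⌉₊ : ℝ) < N := by
      exact_mod_cast Nat.lt_of_lt_of_le (Nat.lt_succ_self _) hN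
    linarith
  have hN0 : 0 < (N : ℝ) := lt_of_le_of_lt (by positivity) hNC
  -- the qualifying set of perturbation pairs
  set S : Set (BState N × BState N) :=
    {r ∈ PerturbPairs N |
        ∃ T₀ : ℕ, ∀ tstar : ℕ, T₀ ≤ tstar →
          q * ((tstar : ℝ) + 1) ≤
            (({t : ℕ | t ≤ tstar ∧
                α * N ≤ (hammingDist (f^[t] r.1) (f^[t] r.2) : ℝ)}).ncard : ℝ)} with hSdef
  have hSfin : S.Finite := Set.toFinite S
  set SF := hSfin.toFinset with hSF
  have hcard : p * ((N : ℝ) * 2 ^ N) ≤ (SF.card : ℝ) := by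
    rw [hSF, ← Set.ncard_eq_toFinset_card S hSfin]
    exact hdec
  -- choose thresholds and take the max
  set T0fun : BState N × BState N → ℕ :=
    fun r => if h : r ∈ S then h.2.choose else 0 with hT0
  set tst : ℕ := SF.sup T0fun with htst
  set T1 : ℝ := (tst : ℝ) + 1 with hT1
  have hT1pos : 0 < T1 := by positivity
  -- per-pair lower bound for pairs in SF
  have hlow : ∀ r ∈ SF, (α * N) * (q * T1) ≤
      ∑ t ∈ Finset.range (tst + 1), (hammingDist (f^[t] r.1) (f^[t] r.2) : ℝ) := by
    intro r hr
    have hrS : r ∈ S := hSfin.mem_toFinset.mp hr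
    have hTle : T0fun r ≤ tst := by
      rw [htst]; exact Finset.le_sup hr
    have hTeq : T0fun r = hrS.2.choose := by
      simp only [hT0]
      exact dif_pos hrS
    have hq' : q * T1 ≤
        (({t : ℕ | t ≤ tst ∧ α * N ≤ (hammingDist (f^[t] r.1) (f^[t] r.2) : ℝ)}).ncard : ℝ) :=
      hrS.2.choose_spec tst (hTeq ▸ hTle)
    set U : Set ℕ := {t : ℕ | t ≤ tst ∧ α * N ≤ (hammingDist (f^[t] r.1) (f^[t] r.2) : ℝ)} with hU
    have hUfin : U.Finite := (Set.finite_Iic tst).subset (fun t ht => ht.1)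
    have hUcard : (U.ncard : ℝ) = (hUfin.toFinset.card : ℝ) := by
      rw [Set.ncard_eq_toFinset_card U hUfin]
    have hsub : hUfin.toFinset ⊆ Finset.range (tst + 1) := by
      intro t ht
      have := (hUfin.mem_toFinset.mp ht).1
      exact Finset.mem_range.mpr (Nat.lt_succ_of_le this)
    have h1 : ∑ t ∈ hUfin.toFinset, (hammingDist (f^[t] r.1) (f^[t] r.2) : ℝ)
        ≤ ∑ t ∈ Finset.range (tst + 1), (hammingDist (f^[t] r.1) (f^[t] r.2) : ℝ) :=
      Finset.sum_le_sum_of_subset_of_nonneg hsub (fun t _ _ => by positivity)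
    have h2 : (hUfin.toFinset.card : ℝ) * (α * N) ≤
        ∑ t ∈ hUfin.toFinset, (hammingDist (f^[t] r.1) (f^[t] r.2) : ℝ) := by
      have := Finset.card_nsmul_le_sum hUfin.toFinset
        (fun t => (hammingDist (f^[t] r.1) (f^[t] r.2) : ℝ)) (α * N)
        (fun t ht => (hUfin.mem_toFinset.mp ht).2)
      rwa [nsmul_eq_mul] at this
    have h3 : (α * N) * (q * T1) ≤ (hUfin.toFinset.card : ℝ) * (α * N) := by
      have hαN : (0 : ℝ) ≤ α * N := by positivity
      have : q * T1 ≤ (hUfin.toFinset.card : ℝ) := by rw [← hUcard]; exact hq'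
      nlinarith [this, hαN]
    linarith
  -- pairs in SF are perturbation pairs
  have hSFsub : SF ⊆ PP N := by
    intro r hr
    have hrS : r ∈ S := hSfin.mem_toFinset.mp hr
    have : hammingDist r.1 r.2 = 1 := hrS.1
    simp only [PP, Finset.mem_filter, Finset.mem_univ, true_and]
    exact this
  -- lower bound on the grand total
  have hlower : (p * ((N : ℝ) * 2 ^ N)) * ((α * N) * (q * T1)) ≤
      ∑ r ∈ PP N, ∑ t ∈ Finset.range (tst + 1), (hammingDist (f^[t] r.1) (f^[t] r.2) : ℝ) := by
    have hs1 : ∑ r ∈ SF, ((α * N) * (q * T1)) ≤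
        ∑ r ∈ SF, ∑ t ∈ Finset.range (tst + 1), (hammingDist (f^[t] r.1) (f^[t] r.2) : ℝ) :=
      Finset.sum_le_sum hlow
    have hs2 : ∑ r ∈ SF, ∑ t ∈ Finset.range (tst + 1), (hammingDist (f^[t] r.1) (f^[t] r.2) : ℝ)
        ≤ ∑ r ∈ PP N, ∑ t ∈ Finset.range (tst + 1), (hammingDist (f^[t] r.1) (f^[t] r.2) : ℝ) :=
      Finset.sum_le_sum_of_subset_of_nonneg hSFsub (fun r _ _ => by positivity)
    have hs0 : (p * ((N : ℝ) * 2 ^ N)) * ((α * N) * (q * T1)) ≤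
        ∑ r ∈ SF, ((α * N) * (q * T1)) := by
      rw [Finset.sum_const, nsmul_eq_mul]
      have hfac : (0 : ℝ) ≤ (α * N) * (q * T1) := by positivity
      exact mul_le_mul_of_nonneg_right hcard hfac
    linarith
  -- upper bound on the grand total
  have hupper : ∑ r ∈ PP N, ∑ t ∈ Finset.range (tst + 1), (hammingDist (f^[t] r.1) (f^[t] r.2) : ℝ)
      ≤ T1 * (2 * ((N : ℝ) * Real.sqrt N * 2 ^ N)) := by
    rw [Finset.sum_comm]
    calc ∑ t ∈ Finset.range (tst + 1), ∑ r ∈ PP N, (hammingDist (f^[t] r.1) (f^[t] r.2) : ℝ)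
        ≤ ∑ _t ∈ Finset.range (tst + 1), 2 * ((N : ℝ) * Real.sqrt N * 2 ^ N) :=
          Finset.sum_le_sum (fun t _ => per_time_bound f hf t)
      _ = T1 * (2 * ((N : ℝ) * Real.sqrt N * 2 ^ N)) := by
          rw [Finset.sum_const, nsmul_eq_mul, Finset.card_range, hT1]
          push_cast
          ring
  -- combine and derive contradiction
  set s : ℝ := Real.sqrt N with hs
  have hss : s * s = (N : ℝ) := Real.mul_self_sqrt (Nat.cast_nonneg N)
  have hs0 : 0 ≤ s := Real.sqrt_nonneg _
  have hstep : d * N ≤ 2 * s := by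
    have hpos : (0 : ℝ) < ((N : ℝ) * 2 ^ N) * T1 := by positivity
    refine le_of_mul_le_mul_right ?_ hpos
    calc d * N * (((N : ℝ) * 2 ^ N) * T1)
        = (p * ((N : ℝ) * 2 ^ N)) * ((α * N) * (q * T1)) := by rw [hd]; ring
      _ ≤ T1 * (2 * ((N : ℝ) * s * 2 ^ N)) := le_trans hlower hupper
      _ = 2 * s * (((N : ℝ) * 2 ^ N) * T1) := by ring
  clear hdec hlow hlower hupper hSFsub hcard hT1pos
  have h4 : (4 : ℝ) < (N : ℝ) * d ^ 2 := by
    have hd2 : (0 : ℝ) < d ^ 2 := by positivity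
    have hkey : ((2 / d) ^ 2 : ℝ) * d ^ 2 = 4 := by field_simp; norm_num
    have := mul_lt_mul_of_pos_right hNC hd2
    linarith
  have hdn : (0 : ℝ) ≤ d * N := by positivity
  have hmul : d * N * (d * N) ≤ 2 * s * (2 * s) :=
    mul_le_mul hstep hstep hdn (by linarith)
  have hsq : d ^ 2 * (N : ℝ) ^ 2 ≤ 4 * (N : ℝ) := by
    rw [show d ^ 2 * (N : ℝ) ^ 2 = d * N * (d * N) from by ring]
    rw [show (4 : ℝ) * N = 2 * s * (2 * s) from by rw [← hss]; ring]
    exact hmul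
  have h5' := mul_lt_mul_of_pos_left h4 hN0
  have h5 : (4 : ℝ) * N < d ^ 2 * (N : ℝ) ^ 2 := by
    rw [show d ^ 2 * (N : ℝ) ^ 2 = (N : ℝ) * ((N : ℝ) * d ^ 2) from by ring]
    linarith
  linarith
end

section
/- For every real number c with 1 < c < √3 there exist a rational number ε > 0 and a positive even integer k such that k/(1+ε) is an integer, (1+ε)·log₂(c) < 1, and the number of Boolean vectors s of length k that satisfy s_{2i−1} ≤ s_{2i} for every i ∈ {1, ..., k/2} and have exactly k/2 coordinates equal to 1 is at least 2^{k/(1+ε)}. -/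
/-!
Each pair of coordinates of a word in `C_{2n}` reads `00`, `01` or `11`. Choosing `j` pairs `11`
and `j` pairs `01` among `3j` pairs gives `|C_{6j}| ≥ C(3j, j) C(2j, j) ≥ 27^j / (3j+1)^2`, so
`|C_{6j}| ≥ 2^{6j/(1+ε)}` for large `j` as soon as `1/(1+ε) < log₂ √3`, that is `2^{6/(1+ε)} < 27`.
Since `log₂ c < log₂ √3`, any rational `1/(1+ε) = a/d` strictly between the two works, with
`k = 6dt` for `t` large.
-/

-- Coordinates are `0`-indexed: the pairs `(2i - 1, 2i)` of the paper are `(2i, 2i + 1)` here.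
def robustCode (k : ℕ) : Set (Fin k → Bool) :=
  {s | (∀ i : Fin k, Even (i : ℕ) → ∀ h : (i : ℕ) + 1 < k, s i ≤ s ⟨(i : ℕ) + 1, h⟩) ∧
    (Finset.univ.filter fun i => s i = true).card = k / 2}

namespace RobustCode

open Finset

variable {n : ℕ}

def fstOfPair : Fin n ↪ Fin (2 * n) :=
  ⟨fun x => ⟨2 * x, by omega⟩, fun x y h => by simpa [Fin.ext_iff] using h⟩

def sndOfPair : Fin n ↪ Fin (2 * n) :=
  ⟨fun x => ⟨2 * x + 1, by omega⟩, fun x y h => by simpa [Fin.ext_iff] using h⟩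

@[simp]
theorem val_fstOfPair (x : Fin n) : (fstOfPair x : ℕ) = 2 * x := rfl

@[simp]
theorem val_sndOfPair (x : Fin n) : (sndOfPair x : ℕ) = 2 * x + 1 := rfl

theorem fstOfPair_ne_sndOfPair (x y : Fin n) : fstOfPair x ≠ sndOfPair y := by
  rw [ne_eq, Fin.ext_iff, val_fstOfPair, val_sndOfPair]
  omega

/-- The set of ones of the word whose pair `x` reads `11` for `x ∈ P`, `01` for `x ∈ Q \ P`
and `00` otherwise. -/
def support (P Q : Finset (Fin n)) : Finset (Fin (2 * n)) :=
  P.map fstOfPair ∪ (P ∪ Q).map sndOfPair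

@[simp]
theorem fstOfPair_mem_support {P Q : Finset (Fin n)} {x : Fin n} :
    fstOfPair x ∈ support P Q ↔ x ∈ P := by
  have : fstOfPair x ∉ (P ∪ Q).map sndOfPair := by
    simpa using fun y _ h => fstOfPair_ne_sndOfPair x y h.symm
  simp [support, this]

@[simp]
theorem sndOfPair_mem_support {P Q : Finset (Fin n)} {x : Fin n} :
    sndOfPair x ∈ support P Q ↔ x ∈ P ∪ Q := by
  have : sndOfPair x ∉ P.map fstOfPair := by
    simpa using fun y _ h => fstOfPair_ne_sndOfPair y x h
  simp [support, this]

theorem card_support {P Q : Finset (Fin n)} (h : Disjoint P Q) :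
    (support P Q).card = 2 * P.card + Q.card := by
  rw [support, card_union_of_disjoint, card_map, card_map, card_union_of_disjoint h]
  · ring
  · simp only [disjoint_left, mem_map]
    rintro _ ⟨x, -, rfl⟩ ⟨y, -, hy⟩
    exact fstOfPair_ne_sndOfPair x y hy.symm

theorem exists_eq_fstOfPair {i : Fin (2 * n)} (hi : Even (i : ℕ)) (h : (i : ℕ) + 1 < 2 * n) :
    ∃ x : Fin n, i = fstOfPair x ∧ (⟨i + 1, h⟩ : Fin (2 * n)) = sndOfPair x := by
  obtain ⟨m, hm⟩ := hi
  refine ⟨⟨m, by omega⟩, ?_, ?_⟩ <;> simp only [Fin.ext_iff, val_fstOfPair, val_sndOfPair] <;> omega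

theorem indicator_support_mem_robustCode {P Q : Finset (Fin n)} (h : Disjoint P Q)
    (hcard : 2 * P.card + Q.card = n) :
    (fun i => decide (i ∈ support P Q)) ∈ robustCode (2 * n) := by
  refine ⟨fun i hi h => ?_, ?_⟩
  · obtain ⟨x, rfl, hx⟩ := exists_eq_fstOfPair hi h
    simp only [hx, fstOfPair_mem_support, sndOfPair_mem_support, Bool.le_iff_imp,
      decide_eq_true_eq]
    exact mem_union_left Q
  · simp [card_support h, hcard]

theorem choose_mul_choose_le_ncard {p q : ℕ} (h : 2 * p + q = n) :
    n.choose p * (n - p).choose q ≤ (robustCode (2 * n)).ncard := by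
  set T := (univ.powersetCard p).sigma fun P : Finset (Fin n) => Pᶜ.powersetCard q
  have hT : T.card = n.choose p * (n - p).choose q := by
    rw [card_sigma, sum_congr rfl fun P hP => by
      rw [card_powersetCard, card_compl, Fintype.card_fin, (mem_powersetCard.mp hP).2]]
    simp
  have hdisj : ∀ x ∈ T, Disjoint x.1 x.2 := fun x hx => disjoint_left.mpr fun a ha hb =>
    mem_compl.mp ((mem_powersetCard.mp (mem_sigma.mp hx).2).1 hb) ha
  rw [← hT, ← Set.ncard_coe_finset]
  refine Set.ncard_le_ncard_of_injOn (fun x i => decide (i ∈ support x.1 x.2))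
    (fun x hx => indicator_support_mem_robustCode (hdisj x hx) ?_) ?_
  · obtain ⟨hP, hQ⟩ := mem_sigma.mp hx
    rw [(mem_powersetCard.mp hP).2, (mem_powersetCard.mp hQ).2, h]
  · rintro ⟨P, Q⟩ hx ⟨P', Q'⟩ hx' heq
    have hPQ : Disjoint P Q := hdisj _ hx
    have hPQ' : Disjoint P' Q' := hdisj _ hx'
    have hS : support P Q = support P' Q' := by
      ext i; simpa using congrFun heq i
    have hP : P = P' := by ext x; rw [← fstOfPair_mem_support, hS, fstOfPair_mem_support]
    subst hP
    have hU : P ∪ Q = P ∪ Q' := by ext x; rw [← sndOfPair_mem_support, hS, sndOfPair_mem_support]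
    rw [← hPQ.sdiff_eq_right, ← hPQ'.sdiff_eq_right, ← union_sdiff_left, hU, union_sdiff_left]

end RobustCode

section Multinomial

open Nat

theorem twentySeven_pow_mul_factorial_pow_le (j : ℕ) :
    27 ^ j * j ! ^ 3 ≤ (3 * j)! * (3 * j + 1) ^ 2 := by
  induction j with
  | zero => simp
  | succ j ih =>
    have h3 : (3 * (j + 1))! = (3 * j + 3) * (3 * j + 2) * (3 * j + 1) * (3 * j)! := by
      rw [show 3 * (j + 1) = 3 * j + 1 + 1 + 1 by ring, factorial_succ, factorial_succ,
        factorial_succ]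
      ring
    calc 27 ^ (j + 1) * (j + 1)! ^ 3 = 27 ^ j * j ! ^ 3 * (27 * (j + 1) ^ 3) := by
          rw [factorial_succ]; ring
      _ ≤ (3 * j)! * (3 * j + 1) ^ 2 * (27 * (j + 1) ^ 3) := by gcongr
      _ ≤ (3 * (j + 1))! * (3 * (j + 1) + 1) ^ 2 := by
          rw [h3]
          nlinarith [factorial_pos (3 * j)]

theorem twentySeven_pow_le_choose_mul_choose (j : ℕ) :
    27 ^ j ≤ (3 * j).choose j * (2 * j).choose j * (3 * j + 1) ^ 2 := by
  have h₁ := choose_mul_factorial_mul_factorial (show j ≤ 3 * j by omega)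
  have h₂ := choose_mul_factorial_mul_factorial (show j ≤ 2 * j by omega)
  rw [show 3 * j - j = 2 * j by omega] at h₁
  rw [show 2 * j - j = j by omega] at h₂
  have hmul : (3 * j)! = (3 * j).choose j * (2 * j).choose j * j ! ^ 3 := by
    rw [← h₁, ← h₂]; ring
  have := twentySeven_pow_mul_factorial_pow_le j
  rw [hmul] at this
  refine le_of_mul_le_mul_right ?_ (pow_pos (factorial_pos j) 3)
  linarith

end Multinomial

section Estimates

open Filter Real

theorem eventually_pow_mul_pow_le_pow {x y : ℕ} (hxy : x < y) (C k : ℕ) :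
    ∀ᶠ t : ℕ in atTop, x ^ t * (C * t + 1) ^ k ≤ y ^ t := by
  rcases Nat.eq_zero_or_pos x with rfl | hx
  · filter_upwards [eventually_ge_atTop 1] with t ht
    simp [zero_pow (by omega : t ≠ 0)]
  have hr : (1 : ℝ) < y / x := by rw [one_lt_div (by positivity)]; exact_mod_cast hxy
  filter_upwards [eventually_ge_atTop 1, (tendsto_pow_const_div_const_pow_of_one_lt k hr).eventually
    (gt_mem_nhds (by positivity : (0 : ℝ) < 1 / (C + 1) ^ k))] with t ht hlt
  rw [div_lt_div_iff₀ (by positivity) (by positivity), one_mul, div_pow,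
    lt_div_iff₀ (by positivity)] at hlt
  have hpoly : ((C * t + 1 : ℕ) : ℝ) ^ k ≤ (C + 1) ^ k * t ^ k := by
    have : (1 : ℝ) ≤ t := by exact_mod_cast ht
    rw [← mul_pow]; push_cast; gcongr; nlinarith
  suffices (x : ℝ) ^ t * ((C * t + 1 : ℕ) : ℝ) ^ k ≤ y ^ t by exact_mod_cast this
  calc (x : ℝ) ^ t * ((C * t + 1 : ℕ) : ℝ) ^ k ≤ x ^ t * ((C + 1) ^ k * t ^ k) := by gcongr
    _ ≤ y ^ t := by linarith

theorem exists_nat_div_mem_Ioo {x y : ℝ} (hx : 0 < x) (hxy : x < y) :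
    ∃ a d : ℕ, 0 < a ∧ 0 < d ∧ x < a / d ∧ (a / d : ℝ) < y := by
  obtain ⟨q, hxq, hqy⟩ := exists_rat_btwn hxy
  have hq : 0 < q := by exact_mod_cast hx.trans hxq
  have hnum : ((q.num.toNat : ℕ) : ℝ) = q.num := by
    exact_mod_cast Int.toNat_of_nonneg (Rat.num_nonneg.mpr hq.le)
  refine ⟨q.num.toNat, q.den, by simpa using Rat.num_pos.mpr hq, q.den_pos, ?_⟩
  rwa [hnum, ← Rat.cast_def, and_iff_right hxq]

theorem pow_lt_pow_of_div_lt_logb {b y : ℝ} (hb : 1 < b) (hy : 0 < y) {a d : ℕ} (hd : 0 < d)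
    (h : (a / d : ℝ) < logb b y) : b ^ a < y ^ d := by
  rw [div_lt_iff₀ (by positivity)] at h
  rw [← rpow_natCast, ← rpow_natCast y, ← rpow_logb (by positivity) hb.ne' hy,
    ← rpow_mul (by positivity)]
  exact rpow_lt_rpow_of_exponent_lt hb h

theorem logb_two_lt_logb_sixtyFour_twentySeven {c : ℝ} (hc0 : 0 < c) (hc : c < √3) :
    logb 2 c < logb 64 27 := by
  calc logb 2 c < logb 2 √3 := logb_lt_logb one_lt_two hc0 hc
    _ = logb 64 27 := by
      rw [logb, logb, log_sqrt (by norm_num), show (64 : ℝ) = 2 ^ 6 by norm_num,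
        show (27 : ℝ) = 3 ^ 3 by norm_num, log_pow, log_pow]
      push_cast; field_simp; ring

end Estimates

theorem exists_two_pow_le_ncard_robustCode {a d : ℕ} (h : 64 ^ a < 27 ^ d) :
    ∃ t > 0, 2 ^ (6 * a * t) ≤ (robustCode (2 * (3 * (d * t)))).ncard := by
  obtain ⟨t, hbound, ht⟩ :=
    ((eventually_pow_mul_pow_le_pow h (3 * d) 2).and (Filter.eventually_gt_atTop 0)).exists
  refine ⟨t, ht, ?_⟩
  set j := d * t
  have hcode := RobustCode.choose_mul_choose_le_ncard (n := 3 * j) (p := j) (q := j) (by ring)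
  rw [show 3 * j - j = 2 * j by omega] at hcode
  refine le_trans (Nat.le_of_mul_le_mul_right ?_ (by positivity : 0 < (3 * j + 1) ^ 2)) hcode
  calc 2 ^ (6 * a * t) * (3 * j + 1) ^ 2 = (64 ^ a) ^ t * (3 * d * t + 1) ^ 2 := by
        rw [← pow_mul, show (64 : ℕ) = 2 ^ 6 by norm_num, ← pow_mul]; ring
    _ ≤ (27 ^ d) ^ t := hbound
    _ = 27 ^ j := by rw [← pow_mul]
    _ ≤ _ := twentySeven_pow_le_choose_mul_choose j

/-- Lemma 5.1: for `1 < c < √3` there exist a positive rational `ε` and a positive even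
integer `k` such that `(k, ε)` is `c`-friendly under the robust coding scheme:
`k/(1+ε)` is an integer, `(1+ε)·log₂ c < 1`, and `|C_k| ≥ 2^{k/(1+ε)}`, where `C_k` is
the set of Boolean vectors of length `k` with `s_{2i−1} ≤ s_{2i}` on consecutive pairs
and exactly `k/2` ones. -/
theorem robust_coding_c_friendly_pair_exists
    (c : ℝ) (hc1 : 1 < c) (hc3 : c < Real.sqrt 3) :
    ∃ ε : ℚ, 0 < ε ∧ ∃ k : ℕ, 0 < k ∧ Even k ∧
      (∃ m : ℤ, (k : ℚ) / (1 + ε) = (m : ℚ)) ∧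
      (1 + (ε : ℝ)) * Real.logb 2 c < 1 ∧
      (2 : ℝ) ^ ((k : ℝ) / (1 + (ε : ℝ))) ≤
        (({s : Fin k → Bool |
            (∀ i : Fin k, Even (i : ℕ) → ∀ h : (i : ℕ) + 1 < k,
              s i ≤ s ⟨(i : ℕ) + 1, h⟩) ∧
            (Finset.univ.filter fun i => s i = true).card = k / 2}).ncard : ℝ) := by
  obtain ⟨a, d, ha, hd, hlogb_lt, hlt_logb⟩ := exists_nat_div_mem_Ioo (Real.logb_pos one_lt_two hc1)
    (logb_two_lt_logb_sixtyFour_twentySeven (one_pos.trans hc1) hc3)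
  have h64 : 64 ^ a < 27 ^ d := by
    exact_mod_cast pow_lt_pow_of_div_lt_logb (by norm_num) (by norm_num) hd hlt_logb
  have had : a < d := (Nat.pow_lt_pow_iff_right (by norm_num : 1 < 27)).mp
    ((Nat.pow_le_pow_left (by norm_num) a).trans_lt h64)
  obtain ⟨t, ht, hcount⟩ := exists_two_pow_le_ncard_robustCode h64
  have hε : (1 : ℝ) + ((d / a - 1 : ℚ) : ℝ) = d / a := by push_cast; ring
  refine ⟨d / a - 1, ?_, 2 * (3 * (d * t)), by positivity, even_two_mul _, ⟨6 * a * t, ?_⟩, ?_, ?_⟩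
  · rw [sub_pos, one_lt_div (by positivity)]
    exact_mod_cast had
  · push_cast
    rw [add_sub_cancel]
    field_simp
    norm_num
  · rw [hε, div_mul_eq_mul_div, div_lt_one (by positivity), ← lt_div_iff₀' (by positivity)]
    exact hlogb_lt
  · rw [hε, show ((2 * (3 * (d * t)) : ℕ) : ℝ) / (d / a) = (6 * a * t : ℕ) by
      push_cast; field_simp; ring, Real.rpow_natCast]
    exact_mod_cast hcount
end

section
/- Let N ≥ 1, let f : (Fin N → Bool) → (Fin N → Bool) be monotone with respect to the coordinatewise partial order, and let x ≤ y be two states. Then the trajectories of x and y reach the same attractor if and only if they coalesce; that is, (∃ t₁ t₂ : ℕ, f^[t₁](x) = f^[t₂](y)) ↔ (∃ t : ℕ, f^[t](x) = f^[t](y)). -/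
/-- A monotone sequence in a finite poset stabilizes at some step. -/
lemma my_stab {S : Type*} [PartialOrder S] [Finite S] (g : ℕ → S)
    (h : ∀ k, g k ≤ g (k + 1)) : ∃ k, g k = g (k + 1) := by
  by_contra hc
  push_neg at hc
  have hs : StrictMono g := strictMono_nat_of_lt_succ fun n => (h n).lt_of_ne (hc n)
  obtain ⟨a, b, hab, he⟩ := Finite.exists_ne_map_eq_of_infinite g
  exact hab (hs.injective he)

/-- For a cooperative Boolean network and comparable initial states `x ≤ y`, the
trajectories reach the same attractor iff they coalesce. -/
theorem comparable_same_attractor_iff_coalesce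
    (N : ℕ) (hN : 1 ≤ N) (f : BState N → BState N) (hf : Monotone f)
    (x y : BState N) (hxy : x ≤ y) :
    (∃ t₁ t₂ : ℕ, f^[t₁] x = f^[t₂] y) ↔ (∃ t : ℕ, f^[t] x = f^[t] y) := by
  constructor
  · rintro ⟨t₁, t₂, h⟩
    have hmono : ∀ t : ℕ, f^[t] x ≤ f^[t] y := fun t => hf.iterate t hxy
    rcases le_total t₂ t₁ with hle | hle
    · obtain ⟨d, rfl⟩ := Nat.exists_eq_add_of_le hle
      -- h : f^[t₂ + d] x = f^[t₂] y
      set c := f^[t₂] y with hc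
      have hg0 : c ≤ f^[d] c := by
        calc c = f^[t₂ + d] x := h.symm
          _ ≤ f^[t₂ + d] y := hmono _
          _ = f^[d] (f^[t₂] y) := by
              rw [add_comm, Function.iterate_add_apply]
      have hg : ∀ k, f^[k * d] c ≤ f^[(k + 1) * d] c := by
        intro k
        have e : f^[(k + 1) * d] c = f^[k * d] (f^[d] c) := by
          rw [add_mul, one_mul, Function.iterate_add_apply]
        rw [e]
        exact (hf.iterate (k * d)) hg0
      obtain ⟨k, hk⟩ := my_stab (fun k => f^[k * d] c) hg
      refine ⟨t₂ + d + k * d, ?_⟩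
      have e1 : f^[t₂ + d + k * d] x = f^[k * d] c := by
        rw [show t₂ + d + k * d = k * d + (t₂ + d) by ring,
          Function.iterate_add_apply, h]
      have e2 : f^[t₂ + d + k * d] y = f^[(k + 1) * d] c := by
        rw [show t₂ + d + k * d = (k + 1) * d + t₂ by ring,
          Function.iterate_add_apply]
      rw [e1, e2]
      exact hk
    · obtain ⟨d, rfl⟩ := Nat.exists_eq_add_of_le hle
      -- h : f^[t₁] x = f^[t₁ + d] y
      set c := f^[t₁] x with hc
      have hg0 : f^[d] c ≤ c := by
        calc f^[d] c = f^[t₁ + d] x := by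
              rw [add_comm, Function.iterate_add_apply]
          _ ≤ f^[t₁ + d] y := hmono _
          _ = c := h.symm
      have hg : ∀ k, f^[(k + 1) * d] c ≤ f^[k * d] c := by
        intro k
        have e : f^[(k + 1) * d] c = f^[k * d] (f^[d] c) := by
          rw [add_mul, one_mul, Function.iterate_add_apply]
        rw [e]
        exact (hf.iterate (k * d)) hg0
      obtain ⟨k, hk⟩ := my_stab (S := (BState N)ᵒᵈ)
        (fun k => OrderDual.toDual (f^[k * d] c)) (fun k => hg k)
      have hk' : f^[k * d] c = f^[(k + 1) * d] c := OrderDual.toDual.injective hk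
      refine ⟨t₁ + d + k * d, ?_⟩
      have e1 : f^[t₁ + d + k * d] x = f^[(k + 1) * d] c := by
        rw [show t₁ + d + k * d = (k * d + d) + t₁ by ring,
          Function.iterate_add_apply, show k * d + d = (k + 1) * d by ring]
      have e2 : f^[t₁ + d + k * d] y = f^[k * d] c := by
        rw [show t₁ + d + k * d = k * d + (t₁ + d) by ring,
          Function.iterate_add_apply, ← h]
      rw [e1, e2, hk']
  · rintro ⟨t, h⟩
    exact ⟨t, t, h⟩
end

section
/- Let N ≥ 1, let S be a set of Boolean vectors in (Fin N → Bool) that is an antichain for the coordinatewise partial order (any two distinct elements of S are incomparable), and let g : S → (Fin N → Bool) be any function. Then there exists a map f : (Fin N → Bool) → (Fin N → Bool) that is monotone with respect to the coordinatewise partial order and satisfies f(s) = g(s) for every s ∈ S. -/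
/-- Proposition 2.1 of the companion paper: any function defined on an antichain of
Boolean vectors extends to a cooperative (monotone) Boolean network. -/
theorem antichain_extends_to_monotone
    (N : ℕ) (hN : 1 ≤ N) (S : Set (BState N))
    (hS : IsAntichain (· ≤ ·) S) (g : S → BState N) :
    ∃ f : BState N → BState N, Monotone f ∧ ∀ s : S, f (s : BState N) = g s := by
  classical
  refine ⟨fun x i => decide (∃ s : S, (s : BState N) ≤ x ∧ g s i = true), ?_, ?_⟩
  · intro x y hxy i
    simp only [decide_eq_true_eq]
    intro h
    rw [decide_eq_true_eq] at *
    exact h.elim fun s hs => ⟨s, hs.1.trans hxy, hs.2⟩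
  · intro s
    funext i
    simp only [decide_eq_true_eq]
    by_cases h : g s i = true
    · rw [h, decide_eq_true_eq]
      exact ⟨s, le_refl _, h⟩
    · simp only [Bool.not_eq_true] at h
      rw [h, decide_eq_false_iff_not]
      rintro ⟨t, hts, hgt⟩
      have : t = s := by
        by_contra hne
        exact hS t.2 s.2 (fun he => hne (Subtype.ext he)) hts
      rw [this, h] at hgt
      exact Bool.false_ne_true hgt
end
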